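/- Let x : I → ℝⁿ be a smooth immersed curve, cr : I → ℝ, and ξ(s) = o + x(s) + ½(x(s),x(s))q its Euclidean light-cone lift. A curve x̂ : I → ℝⁿ with Euclidean lift ξ̂ is a Ribaucour transform of x with tangent cross ratio cr if and only if (d/ds)ξ̂ − (2cr/(ξ',ξ'))·(ξ∧ξ')(ξ̂) is pointwise parallel to ξ̂, where (ξ∧ξ')(y) = (y,ξ)ξ' − (y,ξ')ξ. -/

import Mathlib

/-! Both conditions say that `x̂'` is the vector `cr · (x − x̂) x'⁻¹ (x − x̂)` of the Clifford
algebra. For the Clifford condition this is obtained by solving for `x̂'` with the invertible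
vectors `x'` and `x − x̂`, and `δ u δ = 2(δ,u) δ − |δ|² u` shows that it is a vector. For the
Minkowski condition, the vector on the left is orthogonal to the null vector `ξ̂` (as `ξ̂` is
null and `ξ ∧ ξ'` is skew), so it is a multiple of `ξ̂` as soon as its `o`- and `ℝⁿ`-components
are those of a multiple of `ξ̂`; these two components give the same formula for `x̂'`. -/

noncomputable section
open CliffordAlgebra

/-- Euclidean n-space. -/
abbrev E (n : ℕ) := EuclideanSpace ℝ (Fin n)

/-- The quadratic form of the standard inner product on ℝⁿ. -/
def QE (n : ℕ) : QuadraticForm ℝ (E n) := LinearMap.BilinMap.toQuadraticMap (innerₗ (E n))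

/-- The Clifford-algebra inverse of a vector: v⁻¹ = v / |v|². -/
def cinv {n : ℕ} (v : E n) : CliffordAlgebra (QE n) := (QE n v)⁻¹ • ι (QE n) v

/-- The Minkowski space ℝ^{n+1,1} modelled as ℝ·o ⊕ ℝⁿ ⊕ ℝ·q, a vector (a, v, b)
standing for a·o + v + b·q with o, q lightlike and (o,q) = −1. -/
abbrev M (n : ℕ) := ℝ × E n × ℝ

/-- The Minkowski bilinear form of signature (n+1,1). -/
def BM (n : ℕ) : LinearMap.BilinForm ℝ (M n) :=
  LinearMap.mk₂ ℝ (fun u v => (inner ℝ u.2.1 v.2.1 : ℝ) - u.1 * v.2.2 - v.1 * u.2.2)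
    (by intros; simp [inner_add_left]; ring)
    (by intros; simp [inner_smul_left]; ring)
    (by intros; simp [inner_add_right]; ring)
    (by intros; simp [inner_smul_right]; ring)

/-- The point at the origin o. -/
def oM (n : ℕ) : M n := (1, 0, 0)

/-- The point at infinity q. -/
def qM (n : ℕ) : M n := (0, 0, 1)

/-- The Euclidean lift ξ = o + x + ½(x,x)q of x ∈ ℝⁿ into the light cone. -/
def lift {n : ℕ} (x : E n) : M n := (1, x, (inner ℝ x x : ℝ) / 2)

/-- The derivative of the Euclidean lift along a curve: ξ' = x' + (x,x')q. -/
def liftD {n : ℕ} (x dx : E n) : M n := (0, dx, (inner ℝ x dx : ℝ))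

theorem Units.mul_inv_mul_mul_inv_eq_algebraMap_iff {K A : Type*} [Field K] [Ring A]
    [Algebra K A] (U D : Aˣ) (V : A) (c : K) :
    ↑U * ↑D⁻¹ * V * ↑D⁻¹ = algebraMap K A c ↔ V = c • (↑D * ↑U⁻¹ * ↑D) := by
  rw [Units.mul_inv_eq_iff_eq_mul, mul_assoc, ← Units.eq_inv_mul_iff_mul_eq,
    Units.inv_mul_eq_iff_eq_mul, ← Algebra.smul_def, mul_smul_comm, mul_smul_comm, ← mul_assoc]

namespace CliffordAlgebra

theorem ι_injective {R M : Type*} [CommRing R] [AddCommGroup M] [Module R M]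
    (Q : QuadraticForm R M) [Invertible (2 : R)] : Function.Injective (ι Q) := fun a b h => by
  have h' := congrArg (equivExterior Q) h
  simp only [equivExterior, changeFormEquiv_apply, changeForm_ι] at h'
  exact (ExteriorAlgebra.ι_inj R a b).mp h'

variable {K M : Type*} [Field K] [AddCommGroup M] [Module K M] {Q : QuadraticForm K M}

def ιUnit {v : M} (hv : Q v ≠ 0) : (CliffordAlgebra Q)ˣ where
  val := ι Q v
  inv := (Q v)⁻¹ • ι Q v
  val_inv := by rw [mul_smul_comm, ι_sq_scalar, Algebra.smul_def, ← map_mul, inv_mul_cancel₀ hv,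
    map_one]
  inv_val := by rw [smul_mul_assoc, ι_sq_scalar, Algebra.smul_def, ← map_mul, inv_mul_cancel₀ hv,
    map_one]

theorem coe_ιUnit_inv {v : M} (hv : Q v ≠ 0) :
    (↑(ιUnit hv)⁻¹ : CliffordAlgebra Q) = (Q v)⁻¹ • ι Q v :=
  rfl

theorem ι_mul_ιUnit_inv_mul_ι {u : M} (hu : Q u ≠ 0) (δ : M) :
    ι Q δ * ↑(ιUnit hu)⁻¹ * ι Q δ = ι Q ((Q u)⁻¹ • (QuadraticMap.polar Q δ u • δ - Q δ • u)) := by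
  rw [coe_ιUnit_inv, mul_smul_comm, smul_mul_assoc, ι_mul_ι_mul_ι, map_smul]

theorem ι_mul_ιUnit_inv_mul_ι_mul_ιUnit_inv_eq_algebraMap_iff [Invertible (2 : K)] {u δ : M}
    (hu : Q u ≠ 0) (hδ : Q δ ≠ 0) (v : M) (c : K) :
    ι Q u * ↑(ιUnit hδ)⁻¹ * ι Q v * ↑(ιUnit hδ)⁻¹ = algebraMap K _ c ↔
      v = (c / Q u) • (QuadraticMap.polar Q δ u • δ - Q δ • u) := by
  rw [show ι Q u = ↑(ιUnit hu) from rfl, Units.mul_inv_mul_mul_inv_eq_algebraMap_iff,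
    show (↑(ιUnit hδ) : CliffordAlgebra Q) = ι Q δ from rfl, ι_mul_ιUnit_inv_mul_ι, ← map_smul,
    (ι_injective Q).eq_iff, smul_smul, div_eq_mul_inv]

end CliffordAlgebra

open CliffordAlgebra

section Euclidean

variable {n : ℕ}

theorem QE_apply (v : E n) : QE n v = inner ℝ v v := rfl

theorem QE_ne_zero {v : E n} (hv : v ≠ 0) : QE n v ≠ 0 := by
  rwa [QE_apply, Ne, inner_self_eq_zero]

theorem polar_QE (a b : E n) : QuadraticMap.polar (QE n) a b = 2 * inner ℝ a b := by
  rw [QE, LinearMap.BilinMap.polar_toQuadraticMap, innerₗ_apply_apply, innerₗ_apply_apply,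
    real_inner_comm b a, two_mul]

/-- The vector `c δ u⁻¹ δ` of the Clifford algebra. -/
def ribaucourTangent (c : ℝ) (δ u : E n) : E n :=
  (c / inner ℝ u u) • ((2 * inner ℝ δ u) • δ - inner ℝ δ δ • u)

theorem ι_mul_cinv_mul_ι_mul_cinv_eq_algebraMap_iff {δ u : E n} (hδ : δ ≠ 0) (hu : u ≠ 0)
    (v : E n) (c : ℝ) :
    ι (QE n) u * cinv δ * ι (QE n) v * cinv δ = algebraMap ℝ _ c ↔
      v = ribaucourTangent c δ u := by
  rw [ribaucourTangent, ← QE_apply, ← QE_apply, ← polar_QE]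
  exact ι_mul_ιUnit_inv_mul_ι_mul_ιUnit_inv_eq_algebraMap_iff (QE_ne_zero hu) (QE_ne_zero hδ) v c

end Euclidean

section Minkowski

variable {n : ℕ}

theorem BM_apply (u v : M n) : BM n u v = inner ℝ u.2.1 v.2.1 - u.1 * v.2.2 - v.1 * u.2.2 :=
  rfl

theorem BM_comm (u v : M n) : BM n u v = BM n v u := by
  rw [BM_apply, BM_apply, real_inner_comm]
  ring

def wedge (ξ η y : M n) : M n := BM n y ξ • η - BM n y η • ξ

theorem BM_wedge_self (ξ η y : M n) : BM n (wedge ξ η y) y = 0 := by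
  simp only [wedge, map_sub, map_smul, LinearMap.sub_apply, LinearMap.smul_apply, smul_eq_mul,
    BM_comm η y, BM_comm ξ y]
  ring

theorem BM_liftD_lift (b v : E n) : BM n (liftD b v) (lift b) = 0 := by
  simp [BM_apply, liftD, _root_.lift, real_inner_comm]

theorem BM_liftD_liftD (a u : E n) : BM n (liftD a u) (liftD a u) = inner ℝ u u := by
  simp [BM_apply, liftD]

theorem BM_lift_lift (a b : E n) : BM n (lift b) (lift a) = -inner ℝ (a - b) (a - b) / 2 := by
  simp only [BM_apply, _root_.lift, inner_sub_left, inner_sub_right, real_inner_comm a b]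
  ring

theorem BM_lift_liftD (a b u : E n) : BM n (lift b) (liftD a u) = -inner ℝ (a - b) u := by
  simp only [BM_apply, _root_.lift, liftD, inner_sub_left]
  ring

theorem eq_smul_lift_iff_of_BM_eq_zero {b : E n} {w : M n} (hw : BM n w (lift b) = 0) (lam : ℝ) :
    w = lam • lift b ↔ w.1 = lam ∧ w.2.1 = lam • b := by
  refine ⟨fun h => by simp [h, _root_.lift], fun ⟨h1, h2⟩ => ?_⟩
  obtain ⟨w₁, w₂, w₃⟩ := w
  simp only at h1 h2
  subst h1 h2
  simp only [BM_apply, _root_.lift, real_inner_smul_left] at hw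
  simp only [_root_.lift, Prod.smul_mk, smul_eq_mul, mul_one, Prod.mk.injEq, true_and]
  linarith

theorem exists_liftD_sub_smul_wedge_eq_smul_lift_iff (a b u v : E n) (c : ℝ) :
    (∃ lam : ℝ, liftD b v - (2 * c / BM n (liftD a u) (liftD a u)) •
        wedge (lift a) (liftD a u) (lift b) = lam • lift b) ↔
      v = ribaucourTangent c (a - b) u := by
  set W := liftD b v - (2 * c / BM n (liftD a u) (liftD a u)) •
    wedge (lift a) (liftD a u) (lift b)
  have hW : BM n W (lift b) = 0 := by
    simp only [W, map_sub, map_smul, LinearMap.sub_apply, LinearMap.smul_apply, BM_liftD_lift,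
      BM_wedge_self, smul_zero, sub_zero]
  simp only [eq_smul_lift_iff_of_BM_eq_zero hW, exists_eq_left']
  simp only [W, wedge, BM_liftD_liftD, BM_lift_lift, BM_lift_liftD]
  simp only [liftD, _root_.lift, Prod.fst_sub, Prod.snd_sub, Prod.smul_fst, Prod.smul_snd,
    smul_eq_mul, sub_eq_iff_eq_add, ribaucourTangent]
  refine Eq.congr_right ?_
  match_scalars <;> ring

end Minkowski

theorem ribaucour_linear_system_general {n : ℕ} (x xh dx dxh : ℝ → E n) (cr : ℝ → ℝ)
    (hne : ∀ s, x s ≠ xh s) (himm : ∀ s, dx s ≠ 0) :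
    (∀ s, ι (QE n) (dx s) * cinv (x s - xh s) * ι (QE n) (dxh s) * cinv (x s - xh s)
        = algebraMap ℝ _ (cr s))
    ↔ (∀ s, ∃ lam : ℝ,
        liftD (xh s) (dxh s)
          - (2 * cr s / BM n (liftD (x s) (dx s)) (liftD (x s) (dx s))) •
              (BM n (lift (xh s)) (lift (x s)) • liftD (x s) (dx s)
                - BM n (lift (xh s)) (liftD (x s) (dx s)) • lift (x s))
          = lam • lift (xh s)) := by
  refine forall_congr' fun s => ?_
  rw [ι_mul_cinv_mul_ι_mul_cinv_eq_algebraMap_iff (sub_ne_zero.2 (hne s)) (himm s)]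
  exact (exists_liftD_sub_smul_wedge_eq_smul_lift_iff (x s) (xh s) (dx s) (dxh s) (cr s)).symm

/-- Lemma 2.3: x̂ is a Ribaucour transform of x with tangent cross ratio
cr iff, for the Euclidean lifts ξ, ξ̂, D/ds ξ̂ = ξ̂' − (2cr/(ξ',ξ'))(ξ∧ξ')(ξ̂) is
pointwise parallel to ξ̂. -/
theorem ribaucour_linear_system {n : ℕ} (x xh dx dxh : ℝ → E n) (cr : ℝ → ℝ)
    (hx : ∀ s, HasDerivAt x (dx s) s) (hxh : ∀ s, HasDerivAt xh (dxh s) s)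
    (hne : ∀ s, x s ≠ xh s) (himm : ∀ s, dx s ≠ 0) (himm' : ∀ s, dxh s ≠ 0) :
    (∀ s, ι (QE n) (dx s) * cinv (x s - xh s) * ι (QE n) (dxh s) * cinv (x s - xh s)
        = algebraMap ℝ _ (cr s))
    ↔ (∀ s, ∃ lam : ℝ,
        liftD (xh s) (dxh s)
          - (2 * cr s / BM n (liftD (x s) (dx s)) (liftD (x s) (dx s))) •
              (BM n (lift (xh s)) (lift (x s)) • liftD (x s) (dx s)
                - BM n (lift (xh s)) (liftD (x s) (dx s)) • lift (x s))
          = lam • lift (xh s)) :=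
  ribaucour_linear_system_general x xh dx dxh cr hne himm
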